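/- Let X_1, ..., X_n be i.i.d. Bernoulli(μ) and let σ̂² be the empirical variance. The variance-adaptive confidence lower bound μ̂ − c·σ̂·sqrt(ln(2/δ)/n) − c'·ln(2/δ)/n (empirical-Bernstein form, for suitable absolute constants c, c') is a valid (1−δ) lower confidence bound on μ: P(μ < μ̂ − sqrt(2σ̂²·ln(2/δ)/n) − 7·ln(2/δ)/(3(n−1))) ≤ δ, where μ̂ is the sample mean and σ̂² = (1/n)Σ(X_i − μ̂)². -/

import Mathlib

set_option maxHeartbeats 1000000

open MeasureTheory ProbabilityTheory
open scoped ENNReal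


private lemma hasDerivAt_lb (x : ℝ) (hx : 0 < x) :
    HasDerivAt (fun x : ℝ => Real.log x - 2*(x-1)/(x+1)) (1/x - 4/(x+1)^2) x := by
  have h1 : HasDerivAt Real.log x⁻¹ x := Real.hasDerivAt_log hx.ne'
  have ha : HasDerivAt (fun x : ℝ => 2*(x-1)) 2 x := by
    simpa using ((hasDerivAt_id x).sub_const 1).const_mul 2
  have hb : HasDerivAt (fun x : ℝ => x + 1) 1 x := (hasDerivAt_id x).add_const 1
  have h2 := ha.div hb (by nlinarith)
  have h3 := h1.sub h2
  have hnum : (2*(x+1) - 2*(x-1)*1) = 4 := by ring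
  rw [hnum] at h3
  simpa [one_div, Pi.sub_def, Pi.div_def] using h3

private lemma hasDerivAt_ub (x : ℝ) (hx : 0 < x) :
    HasDerivAt (fun x : ℝ => (x^2-1)/(2*x) - Real.log x) ((x-1)^2/(2*x^2)) x := by
  have h1 : HasDerivAt Real.log x⁻¹ x := Real.hasDerivAt_log hx.ne'
  have ha : HasDerivAt (fun x : ℝ => x^2 - 1) (2*x) x := by
    simpa using ((hasDerivAt_pow 2 x).sub_const 1)
  have hb : HasDerivAt (fun x : ℝ => 2*x) 2 x := by
    simpa using (hasDerivAt_id x).const_mul 2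
  have h2 := ha.div hb (by positivity)
  have h3 := h2.sub h1
  simp only [Pi.sub_def, Pi.div_def] at h3
  refine h3.congr_deriv (Eq.symm ?_)
  rw [eq_sub_iff_add_eq, ← one_div, div_add_div _ _ (by positivity : (2*x^2:ℝ) ≠ 0) hx.ne', div_eq_div_iff (by positivity : (2*x^2*x:ℝ) ≠ 0) (by positivity : ((2*x)^2:ℝ) ≠ 0)]
  ring

lemma log_lb {y : ℝ} (hy : 1 ≤ y) : 2*(y-1)/(y+1) ≤ Real.log y := by
  have key : MonotoneOn (fun x : ℝ => Real.log x - 2*(x-1)/(x+1)) (Set.Ici 1) := by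
    apply monotoneOn_of_deriv_nonneg (convex_Ici 1)
    · intro x hx
      simp only [Set.mem_Ici] at hx
      exact ((hasDerivAt_lb x (by linarith)).continuousAt).continuousWithinAt
    · intro x hx
      rw [interior_Ici, Set.mem_Ioi] at hx
      exact ((hasDerivAt_lb x (by linarith)).differentiableAt).differentiableWithinAt
    · intro x hx
      rw [interior_Ici, Set.mem_Ioi] at hx
      rw [(hasDerivAt_lb x (by linarith)).deriv]
      rw [div_sub_div _ _ (by linarith) (by positivity), div_nonneg_iff]
      left
      constructor <;> nlinarith
  have h0 : (fun x : ℝ => Real.log x - 2*(x-1)/(x+1)) 1 = 0 := by norm_num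
  have := key (Set.self_mem_Ici) (Set.mem_Ici.2 hy) hy
  rw [h0] at this
  simpa using this

lemma log_ub {y : ℝ} (hy : 1 ≤ y) : Real.log y ≤ (y^2-1)/(2*y) := by
  have key : MonotoneOn (fun x : ℝ => (x^2-1)/(2*x) - Real.log x) (Set.Ici 1) := by
    apply monotoneOn_of_deriv_nonneg (convex_Ici 1)
    · intro x hx
      simp only [Set.mem_Ici] at hx
      exact ((hasDerivAt_ub x (by linarith)).continuousAt).continuousWithinAt
    · intro x hx
      rw [interior_Ici, Set.mem_Ioi] at hx
      exact ((hasDerivAt_ub x (by linarith)).differentiableAt).differentiableWithinAt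
    · intro x hx
      rw [interior_Ici, Set.mem_Ioi] at hx
      rw [(hasDerivAt_ub x (by linarith)).deriv]
      positivity
  have h0 : (fun x : ℝ => (x^2-1)/(2*x) - Real.log x) 1 = 0 := by norm_num
  have := key (Set.self_mem_Ici) (Set.mem_Ici.2 hy) hy
  rw [h0] at this
  simpa using this

lemma kl_ge {a μ c : ℝ} (ha1 : a < 1) (hμ0 : 0 < μ) (hμa : μ < a) (hc : 0 < c)
    (ht : Real.sqrt (2*(a*(1-a))*c) + 2*c ≤ a - μ) :
    c ≤ a * Real.log (a/μ) + (1-a) * Real.log ((1-a)/(1-μ)) := by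
  have ha0 : 0 < a := lt_trans hμ0 hμa
  set t : ℝ := a - μ with htdef
  have ht0 : 0 < t := by rw [htdef]; linarith
  set s : ℝ := Real.sqrt (2*(a*(1-a))*c) with hsdef
  have hs0 : 0 ≤ s := Real.sqrt_nonneg _
  have hs2 : s^2 = 2*(a*(1-a))*c :=
    Real.sq_sqrt (by nlinarith [mul_nonneg (mul_nonneg ha0.le (by linarith : (0:ℝ) ≤ 1-a)) hc.le])
  have h1 : 2*c*(a*(1-a)) + 2*c*t ≤ t^2 := by
    nlinarith [mul_le_mul ht ht (by linarith : (0:ℝ) ≤ s + 2*c) (by linarith : (0:ℝ) ≤ t)]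
  have h1' : 2*c*(a*(1-μ)) ≤ t^2 := by
    nlinarith [mul_nonneg (mul_nonneg hc.le ht0.le) (by linarith : (0:ℝ) ≤ 1-a)]
  have hden1 : (0:ℝ) < a + μ := by linarith
  have ha1' : (0:ℝ) < 1 - a := by linarith
  have hμ1' : (0:ℝ) < 1 - μ := by linarith
  -- log lower bound for first term
  have h2 : 2*t/(a+μ) ≤ Real.log (a/μ) := by
    have hy : 1 ≤ a/μ := (one_le_div hμ0).2 hμa.le
    have h := log_lb hy
    have heq : 2*(a/μ-1)/(a/μ+1) = 2*t/(a+μ) := by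
      rw [div_eq_div_iff (by positivity) hden1.ne']
      field_simp
      try ring
    rwa [heq] at h
  -- log upper bound for second term
  have h3 : Real.log ((1-μ)/(1-a)) ≤ (((1-μ)/(1-a))^2-1)/(2*((1-μ)/(1-a))) := by
    apply log_ub
    rw [le_div_iff₀ ha1']
    linarith
  have h3' : Real.log ((1-μ)/(1-a)) ≤ ((1-μ)^2-(1-a)^2)/(2*(1-μ)*(1-a)) := by
    refine h3.trans (le_of_eq ?_)
    field_simp
  have hloginv : Real.log ((1-a)/(1-μ)) = - Real.log ((1-μ)/(1-a)) := by
    rw [← Real.log_inv]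
    congr 1
    field_simp
  rw [hloginv]
  have hfrac : c ≤ t^2/(a+μ) + t^2/(2*(1-μ)) := by
    rw [div_add_div _ _ hden1.ne' (by positivity : (2*(1-μ):ℝ) ≠ 0), le_div_iff₀ (by positivity)]
    nlinarith [mul_le_mul_of_nonneg_right (show a+μ ≤ 2*a by linarith)
      (show (0:ℝ) ≤ 2*c*(1-μ) by positivity), mul_pos ht0 ht0]
  have hEq : t^2/(a+μ) + t^2/(2*(1-μ))
      = a * (2*t/(a+μ)) + (1-a) * (-(((1-μ)^2-(1-a)^2)/(2*(1-μ)*(1-a)))) := by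
    field_simp
    ring
  rw [hEq] at hfrac
  have hterm1 : a * (2*t/(a+μ)) ≤ a * Real.log (a/μ) :=
    mul_le_mul_of_nonneg_left h2 ha0.le
  have hterm2 : (1-a) * (-(((1-μ)^2-(1-a)^2)/(2*(1-μ)*(1-a)))) ≤ (1-a) * (- Real.log ((1-μ)/(1-a))) :=
    mul_le_mul_of_nonneg_left (neg_le_neg h3') ha1'.le
  linarith

/-- Empirical Bernstein (Maurer–Pontil) lower confidence bound.  Let
`X_1, ..., X_n` be i.i.d. Bernoulli(μ) random variables, `μ̂` the sample mean and
`σ̂² = (1/n)Σ(X_i − μ̂)²` the empirical variance.  Then with probability at least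
`1 − δ`, `μ ≥ μ̂ − sqrt(2σ̂²·ln(2/δ)/n) − 7·ln(2/δ)/(3(n−1))`; i.e. the displayed
quantity is a valid `(1−δ)` lower confidence bound on `μ`. -/
theorem stmt13 {Ω : Type*} [MeasurableSpace Ω] (P : Measure Ω) [IsProbabilityMeasure P]
    (n : ℕ) (hn : 2 ≤ n) (X : Fin n → Ω → ℝ) (μ δ : ℝ)
    (hμ : μ ∈ Set.Icc (0:ℝ) 1) (hδ : δ ∈ Set.Ioo (0:ℝ) 1)
    (hmeas : ∀ i, Measurable (X i))
    (hBern : ∀ i, ∀ ω, X i ω = 0 ∨ X i ω = 1)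
    (hmean : ∀ i, ∫ ω, X i ω ∂P = μ)
    (hindep : iIndepFun X P)
    (hident : ∀ i j, Measure.map (X i) P = Measure.map (X j) P) :
    P {ω | μ < (∑ i, X i ω) / n
        - Real.sqrt (2 * ((∑ i, (X i ω - (∑ i, X i ω) / n) ^ 2) / n) * Real.log (2/δ) / n)
        - 7 * Real.log (2/δ) / (3 * (n - 1))}
      ≤ ENNReal.ofReal δ := by
  classical
  obtain ⟨hμ0, hμ1⟩ := hμ
  obtain ⟨hδ0, hδ1⟩ := hδ
  set L : ℝ := Real.log (2/δ) with hLdef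
  have hL : 0 < L := Real.log_pos (by rw [lt_div_iff₀ hδ0]; linarith)
  have hn0 : (0:ℝ) < (n:ℝ) := by
    have : 0 < n := by omega
    exact_mod_cast this
  have hn1 : (1:ℝ) ≤ (n:ℝ) - 1 := by
    have : (2:ℝ) ≤ (n:ℝ) := by exact_mod_cast hn
    linarith
  set c : ℝ := L / n with hcdef
  have hc : 0 < c := by positivity
  have hcn : c * n = L := by rw [hcdef]; field_simp
  have hB2c : 2 * c ≤ 7 * L / (3 * ((n:ℝ) - 1)) := by
    rw [hcdef, show 2*(L/(n:ℝ)) = (2*L)/(n:ℝ) from by ring, div_le_div_iff₀ hn0 (by linarith)]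
    nlinarith
  have hBpos : 0 < 7 * L / (3 * ((n:ℝ) - 1)) := by
    apply div_pos (by linarith) (by linarith)
  -- integrability of each X i
  have hXint : ∀ i, Integrable (X i) P := by
    intro i
    refine Integrable.mono' (integrable_const 1) (hmeas i).aestronglyMeasurable ?_
    exact Filter.Eventually.of_forall fun ω => by rcases hBern i ω with h | h <;> simp [h]
  -- each sample sum is a natural number
  have hk : ∀ ω, ∃ k : ℕ, k ≤ n ∧ (∑ i, X i ω) = (k:ℝ) := by
    intro ω
    refine ⟨(Finset.univ.filter (fun i => X i ω = 1)).card, ?_, ?_⟩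
    · exact (Finset.card_filter_le _ _).trans (by simp)
    · calc (∑ i, X i ω) = ∑ i, (if X i ω = 1 then (1:ℝ) else 0) :=
            Finset.sum_congr rfl (fun i _ => by rcases hBern i ω with h | h <;> simp [h])
        _ = _ := by rw [Finset.sum_boole]
  -- empirical variance identity
  have hvar : ∀ ω (k : ℕ), (∑ i, X i ω) = (k:ℝ) →
      (∑ i, (X i ω - (∑ i, X i ω) / n) ^ 2) / n = ((k:ℝ)/n) * (1 - (k:ℝ)/n) := by
    intro ω k hkω
    have hsq : ∀ i, (X i ω)^2 = X i ω := fun i => by rcases hBern i ω with h | h <;> simp [h]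
    have hexpand : (∑ i, (X i ω - (∑ i, X i ω) / n) ^ 2)
        = ∑ i, ((X i ω)^2 - 2*((k:ℝ)/n)*(X i ω) + ((k:ℝ)/n)^2) := by
      refine Finset.sum_congr rfl (fun i _ => ?_)
      rw [hkω]; ring
    rw [hexpand]
    have : (∑ i, ((X i ω)^2 - 2*((k:ℝ)/n)*(X i ω) + ((k:ℝ)/n)^2))
        = (∑ i, (X i ω)^2) - 2*((k:ℝ)/n)*(∑ i, X i ω) + n*((k:ℝ)/n)^2 := by
      rw [Finset.sum_add_distrib, Finset.sum_sub_distrib, ← Finset.mul_sum, Finset.sum_const]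
      simp [mul_comm]
    rw [this, Finset.sum_congr rfl (fun i _ => hsq i), hkω]
    field_simp
    ring
  -- the set of "bad" counts
  set T : Finset ℕ := (Finset.range (n+1)).filter
      (fun k => μ < (k:ℝ)/n - Real.sqrt (2 * (((k:ℝ)/n) * (1 - (k:ℝ)/n)) * L / n)
        - 7 * L / (3 * ((n:ℝ) - 1))) with hTdef
  by_cases hT : T.Nonempty
  · -- main case
    set m : ℕ := T.min' hT with hmdef
    have hmT : m ∈ T := T.min'_mem hT
    obtain ⟨hmr, hgm⟩ := Finset.mem_filter.1 hmT
    have hmn' : m ≤ n := by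
      have := Finset.mem_range.1 hmr
      omega
    set a : ℝ := (m:ℝ)/n with hadef
    have ha1 : a ≤ 1 := by
      simp only [hadef]
      rw [div_le_one hn0]; exact_mod_cast hmn'
    have ha0 : 0 ≤ a := by positivity
    have hsqnn : 0 ≤ Real.sqrt (2 * (a * (1 - a)) * L / n) := Real.sqrt_nonneg _
    have hμa : μ < a := by
      nlinarith [hsqnn, hBpos, hgm]
    have hta : Real.sqrt (2 * (a * (1-a)) * c) + 2 * c ≤ a - μ := by
      have hrw : 2 * (a * (1-a)) * L / n = 2 * (a * (1-a)) * c := by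
        rw [hcdef]; ring
      rw [← hrw]
      linarith [hgm, hB2c]
    -- event is contained in {m ≤ sum}
    have hEsub : {ω | μ < (∑ i, X i ω) / n
        - Real.sqrt (2 * ((∑ i, (X i ω - (∑ i, X i ω) / n) ^ 2) / n) * Real.log (2/δ) / n)
        - 7 * Real.log (2/δ) / (3 * (n - 1))} ⊆ {ω | (m:ℝ) ≤ (∑ i, X i) ω} := by
      intro ω hω
      simp only [Set.mem_setOf_eq] at hω ⊢
      obtain ⟨k, hkn, hkω⟩ := hk ω
      have hkT : k ∈ T := by
        refine Finset.mem_filter.2 ⟨Finset.mem_range.2 (by omega), ?_⟩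
        rw [hvar ω k hkω, hkω] at hω
        exact hω
      have : m ≤ k := Finset.min'_le T k hkT
      rw [Finset.sum_apply, hkω]
      exact_mod_cast this
    refine le_trans (measure_mono hEsub) ?_
    rcases hμ0.lt_or_eq with hμpos | hμzero
    · -- 0 < μ
      have hμ1' : μ < 1 := lt_of_lt_of_le hμa ha1
      by_cases hma : m = n
      · -- a = 1 case
        have ha1eq : a = 1 := by
          rw [hadef, hma, div_self hn0.ne']
        -- from hta : sqrt(2*(a*(1-a))*c) + 2*c ≤ a - μ  with a = 1
        have h2c : 2 * c ≤ 1 - μ := by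
          rw [ha1eq] at hta
          have : Real.sqrt (2 * (1 * (1 - 1)) * c) = 0 := by norm_num
          rw [this] at hta
          linarith
        -- containment in the all-ones event
        have hsub1 : {ω | (m:ℝ) ≤ (∑ i, X i) ω} ⊆ ⋂ i, X i ⁻¹' {(1:ℝ)} := by
          intro ω hω
          simp only [Set.mem_setOf_eq] at hω
          simp only [Set.mem_iInter, Set.mem_preimage, Set.mem_singleton_iff]
          intro i
          rcases hBern i ω with h0 | h1
          · exfalso
            have hsum : (∑ j, X j) ω = ∑ j ∈ Finset.univ.erase i, X j ω + X i ω := by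
              rw [Finset.sum_apply, Finset.sum_erase_add _ _ (Finset.mem_univ i)]
            have hbound : ∑ j ∈ Finset.univ.erase i, X j ω ≤ ((n:ℝ) - 1) := by
              have hle : ∑ j ∈ Finset.univ.erase i, X j ω
                  ≤ ∑ _j ∈ Finset.univ.erase i, (1:ℝ) := by
                refine Finset.sum_le_sum (fun j _ => ?_)
                rcases hBern j ω with h | h <;> simp [h]
              rw [Finset.sum_const, nsmul_eq_mul, mul_one] at hle
              have hcard : (Finset.univ.erase i).card = n - 1 := by
                rw [Finset.card_erase_of_mem (Finset.mem_univ i), Finset.card_univ,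
                  Fintype.card_fin]
              rw [hcard] at hle
              refine hle.trans ?_
              have : ((n - 1 : ℕ) : ℝ) = (n:ℝ) - 1 := by
                have : 1 ≤ n := by omega
                push_cast [this]
                ring
              rw [this]
            rw [hsum, h0, add_zero] at hω
            rw [hma] at hω
            linarith
          · exact h1
        refine le_trans (measure_mono hsub1) ?_
        have hprod : P (⋂ i, X i ⁻¹' {(1:ℝ)}) = ∏ i : Fin n, P (X i ⁻¹' {(1:ℝ)}) :=
          hindep.meas_iInter (fun i => ⟨{(1:ℝ)}, measurableSet_singleton 1, rfl⟩)
        have hPi : ∀ i, P (X i ⁻¹' {(1:ℝ)}) = ENNReal.ofReal μ := by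
          intro i
          have hXind : (X i) = Set.indicator (X i ⁻¹' {(1:ℝ)}) (fun _ => (1:ℝ)) := by
            funext ω
            rcases hBern i ω with h | h
            · rw [h, Set.indicator_of_notMem]
              simp [Set.mem_preimage, h]
            · rw [h, Set.indicator_of_mem]
              simp [Set.mem_preimage, h]
          have hμint : μ = (P (X i ⁻¹' {(1:ℝ)})).toReal := by
            rw [← hmean i]
            conv_lhs => rw [hXind]
            rw [integral_indicator_const _ ((hmeas i) (measurableSet_singleton 1))]
            simp [measureReal_def]
          rw [hμint, ENNReal.ofReal_toReal (measure_ne_top P _)]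
        rw [hprod]
        simp only [hPi]
        rw [Finset.prod_const, Finset.card_univ, Fintype.card_fin,
          ← ENNReal.ofReal_pow hμpos.le]
        apply ENNReal.ofReal_le_ofReal
        -- μ^n ≤ δ
        have hμexp : μ ≤ Real.exp (-(2*c)) := by
          have := Real.add_one_le_exp (-(2*c))
          linarith
        have hpow : μ^n ≤ Real.exp (-(2*c))^n :=
          pow_le_pow_left₀ hμ0 hμexp n
        have hexppow : Real.exp (-(2*c))^n = Real.exp (-(2*L)) := by
          rw [← Real.exp_nat_mul]
          congr 1
          have : (n:ℝ) * -(2*c) = -(2*(c*n)) := by ring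
          rw [this, hcn]
        have hexpL : Real.exp L = 2/δ := Real.exp_log (by positivity)
        have hfin : Real.exp (-(2*L)) ≤ δ := by
          rw [show (-(2*L)) = -L + -L by ring, Real.exp_add, Real.exp_neg, hexpL]
          rw [show (2/δ)⁻¹ = δ/2 by rw [inv_div]]
          nlinarith
        calc μ^n ≤ Real.exp (-(2*L)) := hexppow ▸ hpow
          _ ≤ δ := hfin
      · -- a < 1 case
        have ha1' : a < 1 := by
          simp only [hadef]
          rw [div_lt_one hn0]
          exact_mod_cast lt_of_le_of_ne hmn' hma
        have ha0' : 0 < a := lt_of_le_of_lt hμ0 hμa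
        have h1a : (0:ℝ) < 1 - a := by linarith
        have h1μ : (0:ℝ) < 1 - μ := by linarith
        set lam : ℝ := Real.log (a*(1-μ)/((1-a)*μ)) with hlamdef
        have hargpos : (0:ℝ) < a*(1-μ)/((1-a)*μ) := by positivity
        have harg1 : 1 < a*(1-μ)/((1-a)*μ) := by
          rw [lt_div_iff₀ (by positivity)]
          nlinarith
        have hlampos : 0 < lam := Real.log_pos harg1
        have helam : Real.exp lam = a*(1-μ)/((1-a)*μ) := Real.exp_log hargpos
        have hexp_eq : ∀ (i : Fin n) (ω : Ω),
            Real.exp (lam * X i ω) = 1 + (Real.exp lam - 1) * X i ω := by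
          intro i ω
          rcases hBern i ω with h | h <;> simp [h]
        have hint_i : ∀ i, Integrable (fun ω => Real.exp (lam * X i ω)) P := by
          intro i
          refine Integrable.congr ((integrable_const (1:ℝ)).add
            ((hXint i).const_mul (Real.exp lam - 1))) ?_
          exact Filter.Eventually.of_forall fun ω => ((hexp_eq i ω).symm : _)
        have hmgf_i : ∀ i, mgf (X i) P lam = (1-μ)/(1-a) := by
          intro i
          rw [mgf]
          rw [integral_congr_ae (Filter.Eventually.of_forall (fun ω => hexp_eq i ω))]
          rw [integral_add (integrable_const 1) ((hXint i).const_mul _)]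
          rw [MeasureTheory.integral_const_mul, hmean i]
          simp only [integral_const, measure_univ, ENNReal.toReal_one, smul_eq_mul, one_mul, probReal_univ]
          rw [helam]
          field_simp
          ring
        have hintS : Integrable (fun ω => Real.exp (lam * (∑ i, X i) ω)) P :=
          hindep.integrable_exp_mul_sum hmeas (fun i _ => hint_i i)
        have hcher := measure_ge_le_exp_mul_mgf (X := ∑ i, X i) (μ := P)
          (ε := (m:ℝ)) hlampos.le hintS
        have hmgfS : mgf (∑ i, X i) P lam = ((1-μ)/(1-a))^n := by
          rw [hindep.mgf_sum hmeas]
          simp only [hmgf_i]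
          rw [Finset.prod_const, Finset.card_univ, Fintype.card_fin]
        rw [hmgfS] at hcher
        -- numeric bound on the Chernoff quantity
        have hybound : Real.exp (-lam * m) * ((1-μ)/(1-a))^n ≤ δ := by
          have hypos : (0:ℝ) < (1-μ)/(1-a) := by positivity
          have hyn : ((1-μ)/(1-a))^n = Real.exp ((n:ℝ) * Real.log ((1-μ)/(1-a))) := by
            rw [Real.exp_nat_mul, Real.exp_log hypos]
          rw [hyn, ← Real.exp_add]
          have hlameq : lam = Real.log (a/μ) + Real.log ((1-μ)/(1-a)) := by
            rw [hlamdef, ← Real.log_mul (by positivity) (by positivity)]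
            congr 1
            field_simp
          have hloginv : Real.log ((1-a)/(1-μ)) = - Real.log ((1-μ)/(1-a)) := by
            rw [← Real.log_inv]
            congr 1
            rw [inv_div]
          have hma' : (m:ℝ) = a * n := by
            rw [hadef]
            field_simp
          have hKL : c ≤ a * Real.log (a/μ) + (1-a) * Real.log ((1-a)/(1-μ)) :=
            kl_ge ha1' hμpos hμa hc hta
          have hexparg : -lam * m + (n:ℝ) * Real.log ((1-μ)/(1-a)) ≤ -L := by
            have : -lam * m + (n:ℝ) * Real.log ((1-μ)/(1-a))
                = -((n:ℝ) * (a * Real.log (a/μ) + (1-a) * Real.log ((1-a)/(1-μ)))) := by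
              rw [hma', hlameq, hloginv]
              ring
            rw [this, ← hcn]
            have hnc : c * n ≤ (n:ℝ) * (a * Real.log (a/μ) + (1-a) * Real.log ((1-a)/(1-μ))) := by
              rw [mul_comm c (n:ℝ)]
              exact mul_le_mul_of_nonneg_left hKL hn0.le
            linarith
          have hexpL : Real.exp L = 2/δ := Real.exp_log (by positivity)
          calc Real.exp (-lam * m + (n:ℝ) * Real.log ((1-μ)/(1-a)))
              ≤ Real.exp (-L) := Real.exp_le_exp.2 hexparg
            _ ≤ δ := by
              rw [Real.exp_neg, hexpL, inv_div]
              linarith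
        refine (ENNReal.le_ofReal_iff_toReal_le (measure_ne_top P _) hδ0.le).2 ?_
        exact hcher.trans hybound
    · -- μ = 0 case
      have hXae : ∀ i, (X i) =ᵐ[P] 0 := by
        intro i
        refine (integral_eq_zero_iff_of_nonneg ?_ (hXint i)).1 (by rw [hmean i, ← hμzero])
        intro ω
        rcases hBern i ω with h | h <;> simp [h]
      have hae : ∀ᵐ ω ∂P, ∀ i, X i ω = 0 := by
        rw [MeasureTheory.ae_all_iff]
        exact fun i => hXae i
      have hm1 : 1 ≤ m := by
        have hapos : 0 < a := hμzero.trans_lt hμa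
        rw [hadef] at hapos
        have hm0 : m ≠ 0 := by
          intro h0
          rw [h0] at hapos
          norm_num at hapos
        exact Nat.one_le_iff_ne_zero.2 hm0
      have : P {ω | (m:ℝ) ≤ (∑ i, X i) ω} = 0 := by
        refine measure_mono_null ?_ (ae_iff.mp hae)
        intro ω hω
        simp only [Set.mem_setOf_eq] at hω ⊢
        intro hall
        have hzero : (∑ i, X i) ω = 0 := by
          rw [Finset.sum_apply]
          exact Finset.sum_eq_zero (fun i _ => hall i)
        rw [hzero] at hω
        have : (1:ℝ) ≤ (m:ℝ) := by exact_mod_cast hm1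
        linarith
      rw [this]
      exact zero_le
  · -- T empty: event is empty
    have hEempty : {ω | μ < (∑ i, X i ω) / n
        - Real.sqrt (2 * ((∑ i, (X i ω - (∑ i, X i ω) / n) ^ 2) / n) * Real.log (2/δ) / n)
        - 7 * Real.log (2/δ) / (3 * (n - 1))} = ∅ := by
      rw [Set.eq_empty_iff_forall_notMem]
      intro ω hω
      simp only [Set.mem_setOf_eq] at hω
      obtain ⟨k, hkn, hkω⟩ := hk ω
      apply hT
      refine ⟨k, Finset.mem_filter.2 ⟨Finset.mem_range.2 (by omega), ?_⟩⟩
      rw [hvar ω k hkω, hkω] at hω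
      exact hω
    rw [hEempty]
    simp
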